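/- arXiv:1812.11655 — 2 statements merged into one kernel-verified Lean document; each statement's English description precedes it below -/
import Mathlib

section
/- Let n ≥ 1, T > 0, let u : [0,T] × ℝⁿ → ℝ be continuous, and let (t,x) ∈ (0,T) × ℝⁿ. Then (p,q,X) ∈ 𝒫^{2,+}u(t,x) if and only if there exists a function φ : [0,T] × ℝⁿ → ℝ which is continuously differentiable in the time variable and twice continuously differentiable in the space variable, such that u − φ attains a strict global maximum over [0,T] × ℝⁿ at (t,x) and (φ(t,x), ∂_t φ(t,x), ∇_x φ(t,x), ∇²_x φ(t,x)) = (u(t,x), p, q, X). -/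
noncomputable section

open scoped BigOperators

/-- The quadratic form `⟨X v, v⟩` of a matrix `X` on Euclidean space. -/
def matQuadForm {n : ℕ} (X : Matrix (Fin n) (Fin n) ℝ)
    (v : EuclideanSpace ℝ (Fin n)) : ℝ :=
  ∑ i, (∑ j, X i j * v j) * v i

/-- `(p, q, X)` belongs to the parabolic superjet `𝒫^{2,+} u (t,x)` of
`u : [0,T] × ℝⁿ → ℝ` at `(t,x)`: `X` is symmetric and
`u(s,y) ≤ u(t,x) + p (s−t) + ⟨q, y−x⟩ + ½⟨X(y−x), y−x⟩ + o(|s−t| + ‖y−x‖²)`. -/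
def InParabolicSuperjet {n : ℕ} (T : ℝ) (u : ℝ → EuclideanSpace ℝ (Fin n) → ℝ)
    (t : ℝ) (x : EuclideanSpace ℝ (Fin n))
    (p : ℝ) (q : EuclideanSpace ℝ (Fin n)) (X : Matrix (Fin n) (Fin n) ℝ) : Prop :=
  X.IsSymm ∧
    ∀ ε > (0 : ℝ), ∃ δ > (0 : ℝ), ∀ s ∈ Set.Icc (0 : ℝ) T,
      ∀ y : EuclideanSpace ℝ (Fin n), |s - t| + ‖y - x‖ < δ →
        u s y - u t x - p * (s - t) - (∑ i, q i * (y i - x i))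
            - (1 / 2) * matQuadForm X (y - x)
          ≤ ε * (|s - t| + ‖y - x‖ ^ 2)

open Set Filter Topology intervalIntegral MeasureTheory InnerProductSpace

/-! Backward direction: the jet of a `C^{1,2}` function `φ` at `(t, x)` lies in its
own superjet, by the mean value theorem in time and a second-order Taylor bound in space, and
`u - u(t,x) ≤ φ - φ(t,x)` transfers this to `u`.

Forward direction: the remainder `w` of `u` against the second-order polynomial of the jet
satisfies `w < ρ G(ρ)` with `ρ = |s - t| + ‖y - x‖²`, where the modulus `G` is the monotone
envelope of `w / ρ`. Since `ρ` is a sum of `n + 1` nonnegative terms, `ρ G(ρ)` is dominated by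
`Θ(s - t) + ∑ H(yᵢ - xᵢ)`, where `Θ` (`C¹`) and `H` (`C²`) are flat at `0` and are built as
primitives of the continuous modulus obtained by averaging `G` over `[r, 2r]`. The test function
is the polynomial plus `Θ(s - t) + ∑ H(yᵢ - xᵢ)`. -/

/-- Vanishing on `(-∞, 0]` is a normalization: the primitive `P a = ∫ x in 0..a, g x` then
vanishes there too, and `a ↦ P a + P (-a)` is the even extension of `P` from `[0, ∞)`. -/
structure IsModulus (g : ℝ → ℝ) : Prop where
  mono : Monotone g
  eq_zero_of_nonpos : ∀ r ≤ 0, g r = 0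
  tendsto_zero : Tendsto g (𝓝 0) (𝓝 0)

/-- The mean of `g` over `[r, 2r]`, a continuous modulus squeezed between `g` and `g (2 ·)`. -/
def doublingMean (g : ℝ → ℝ) (r : ℝ) : ℝ := ∫ u in (1 : ℝ)..2, g (r * u)

lemma Monotone.intervalIntegrable_comp_mul {g : ℝ → ℝ} (hg : Monotone g) (r a b : ℝ) :
    IntervalIntegrable (fun u => g (r * u)) volume a b := by
  rcases le_total 0 r with hr | hr
  · exact (hg.comp (monotone_mul_left_of_nonneg hr)).intervalIntegrable
  · exact (hg.comp_antitone (antitone_mul_left hr)).intervalIntegrable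

lemma Monotone.doublingMean_eq_div {g : ℝ → ℝ} (hg : Monotone g) {r : ℝ} (hr : r ≠ 0) :
    doublingMean g r = ((∫ x in (0 : ℝ)..2 * r, g x) - ∫ x in (0 : ℝ)..r, g x) / r := by
  rw [doublingMean, integral_comp_mul_left _ hr, integral_interval_sub_left
    hg.intervalIntegrable hg.intervalIntegrable, smul_eq_mul, mul_one, mul_comm r 2,
    div_eq_inv_mul]

lemma Monotone.half_mul_le_integral {f : ℝ → ℝ} (hf : Monotone f) (hf0 : 0 ≤ f 0) {a : ℝ}
    (ha : 0 ≤ a) : a / 2 * f (a / 2) ≤ ∫ x in (0 : ℝ)..a, f x := by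
  rw [← integral_add_adjacent_intervals (b := a / 2) hf.intervalIntegrable hf.intervalIntegrable]
  have hlow : 0 ≤ ∫ x in (0 : ℝ)..a / 2, f x :=
    integral_nonneg (by linarith) fun x hx => hf0.trans (hf hx.1)
  have hhigh : ∫ x in a / 2..a, f (a / 2) ≤ ∫ x in a / 2..a, f x :=
    integral_mono_on (by linarith) intervalIntegrable_const hf.intervalIntegrable
      fun x hx => hf hx.1
  rw [intervalIntegral.integral_const, smul_eq_mul, show a - a / 2 = a / 2 by ring] at hhigh
  linarith

lemma contDiff_primitive {f : ℝ → ℝ} {n : ℕ} (hf : ContDiff ℝ n f) :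
    ContDiff ℝ (n + 1) (fun a => ∫ x in (0 : ℝ)..a, f x) := by
  refine contDiff_succ_iff_deriv.2 ⟨fun a => ?_, by simp, ?_⟩
  · exact (hf.continuous.integral_hasStrictDerivAt 0 a).hasDerivAt.differentiableAt
  · rwa [funext (hf.continuous.deriv_integral f 0)]

lemma le_add_comp_neg {F : ℝ → ℝ} (hF : ∀ a, 0 ≤ F a) (a : ℝ) : F |a| ≤ F a + F (-a) := by
  rcases abs_choice a with ha | ha <;> rw [ha]
  · linarith [hF (-a)]
  · linarith [hF a]

lemma deriv_add_comp_neg {F : ℝ → ℝ} (hF : Differentiable ℝ F) (a : ℝ) :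
    deriv (fun a => F a + F (-a)) a = deriv F a - deriv F (-a) := by
  rw [deriv_fun_add (g := fun a => F (-a)) (hF a) (hF.comp differentiable_neg a),
    deriv_comp_neg, sub_eq_add_neg]

lemma deriv_sub_comp_neg {F : ℝ → ℝ} (hF : Differentiable ℝ F) (a : ℝ) :
    deriv (fun a => F a - F (-a)) a = deriv F a + deriv F (-a) := by
  rw [deriv_fun_sub (g := fun a => F (-a)) (hF a) (hF.comp differentiable_neg a),
    deriv_comp_neg, sub_neg_eq_add]

namespace IsModulus

variable {g h : ℝ → ℝ}

lemma nonneg (hg : IsModulus g) (r : ℝ) : 0 ≤ g r := by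
  rcases le_total r 0 with hr | hr
  · exact (hg.eq_zero_of_nonpos r hr).ge
  · exact (hg.eq_zero_of_nonpos 0 le_rfl).symm.le.trans (hg.mono hr)

lemma comp (hg : IsModulus g) (hmono : Monotone h) (hnonpos : ∀ r ≤ 0, h r ≤ 0)
    (hlim : Tendsto h (𝓝 0) (𝓝 0)) : IsModulus (fun r => g (h r)) where
  mono := hg.mono.comp hmono
  eq_zero_of_nonpos r hr := hg.eq_zero_of_nonpos _ (hnonpos r hr)
  tendsto_zero := hg.tendsto_zero.comp hlim

lemma comp_const_mul (hg : IsModulus g) {c : ℝ} (hc : 0 ≤ c) :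
    IsModulus (fun r => g (c * r)) :=
  hg.comp (monotone_mul_left_of_nonneg hc) (fun _ hr => mul_nonpos_of_nonneg_of_nonpos hc hr)
    (by simpa using (tendsto_id (x := 𝓝 (0 : ℝ))).const_mul c)

lemma comp_const_mul_posPart_sq (hg : IsModulus g) {c : ℝ} (hc : 0 ≤ c) :
    IsModulus (fun r => g (c * max r 0 ^ 2)) :=
  hg.comp (fun r r' hrr' => mul_le_mul_of_nonneg_left (pow_le_pow_left₀ (le_max_right r 0)
      (max_le_max hrr' le_rfl) 2) hc)
    (fun r hr => by simp [max_eq_right hr])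
    ((by fun_prop : Continuous fun r : ℝ => c * max r 0 ^ 2).tendsto' 0 0 (by simp))

lemma const_mul (hg : IsModulus g) {c : ℝ} (hc : 0 ≤ c) : IsModulus (fun r => c * g r) where
  mono := hg.mono.const_mul hc
  eq_zero_of_nonpos r hr := by rw [hg.eq_zero_of_nonpos r hr, mul_zero]
  tendsto_zero := by simpa using hg.tendsto_zero.const_mul c

lemma monotone_mul_self (hg : IsModulus g) : Monotone (fun r => r * g r) := by
  intro r r' hrr'
  rcases le_total r 0 with hr | hr
  · simp only [hg.eq_zero_of_nonpos r hr, mul_zero]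
    rcases le_total r' 0 with hr' | hr'
    · simp [hg.eq_zero_of_nonpos r' hr']
    · exact mul_nonneg hr' (hg.nonneg r')
  · exact mul_le_mul hrr' (hg.mono hrr') (hg.nonneg r) (hr.trans hrr')

lemma apply_mul_le_apply_mul (hg : IsModulus g) (r : ℝ) {u v : ℝ} (hu : 0 ≤ u) (huv : u ≤ v) :
    g (r * u) ≤ g (r * v) := by
  rcases le_total 0 r with hr | hr
  · exact hg.mono (mul_le_mul_of_nonneg_left huv hr)
  · rw [hg.eq_zero_of_nonpos _ (mul_nonpos_of_nonpos_of_nonneg hr hu)]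
    exact hg.nonneg _

lemma le_doublingMean (hg : IsModulus g) (r : ℝ) : g r ≤ doublingMean g r := by
  have := integral_mono_on (by norm_num) intervalIntegrable_const
    (hg.mono.intervalIntegrable_comp_mul r 1 2)
    fun u hu => by simpa using hg.apply_mul_le_apply_mul r zero_le_one hu.1
  norm_num at this
  exact this

lemma doublingMean_le (hg : IsModulus g) (r : ℝ) : doublingMean g r ≤ g (2 * r) := by
  have := integral_mono_on (by norm_num) (hg.mono.intervalIntegrable_comp_mul r 1 2)
    intervalIntegrable_const
    fun u hu => hg.apply_mul_le_apply_mul r (by linarith [hu.1]) hu.2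
  norm_num at this
  rwa [mul_comm] at this

protected lemma doublingMean (hg : IsModulus g) : IsModulus (doublingMean g) where
  mono r r' hrr' := integral_mono_on (by norm_num) (hg.mono.intervalIntegrable_comp_mul r 1 2)
    (hg.mono.intervalIntegrable_comp_mul r' 1 2)
    fun u hu => hg.mono (mul_le_mul_of_nonneg_right hrr' (by linarith [hu.1]))
  eq_zero_of_nonpos r hr := le_antisymm
    ((hg.doublingMean_le r).trans_eq (hg.eq_zero_of_nonpos _ (by linarith)))
    ((hg.nonneg r).trans (hg.le_doublingMean r))
  tendsto_zero := squeeze_zero (fun r => (hg.nonneg r).trans (hg.le_doublingMean r))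
    hg.doublingMean_le (hg.comp_const_mul zero_le_two).tendsto_zero

lemma continuous_doublingMean (hg : IsModulus g) : Continuous (doublingMean g) := by
  rw [continuous_iff_continuousAt]
  intro r
  rcases eq_or_ne r 0 with rfl | hr
  · simpa [ContinuousAt, hg.doublingMean.eq_zero_of_nonpos 0 le_rfl]
      using hg.doublingMean.tendsto_zero
  · have hprim := continuous_primitive (μ := volume) (fun _ _ => hg.mono.intervalIntegrable) 0
    refine ContinuousAt.congr ?_ ((eventually_ne_nhds hr).mono
      fun r' hr' => (hg.mono.doublingMean_eq_div hr').symm)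
    exact (((hprim.comp (continuous_const.mul continuous_id)).sub hprim).continuousAt).div
      continuousAt_id hr

protected lemma primitive (hh : IsModulus h) (hc : Continuous h) :
    IsModulus (fun a => ∫ x in (0 : ℝ)..a, h x) where
  mono := monotone_of_hasDerivAt_nonneg
    (fun a => (hc.integral_hasStrictDerivAt 0 a).hasDerivAt) hh.nonneg
  eq_zero_of_nonpos a ha := by
    rw [integral_congr (g := fun _ => 0) fun x hx =>
      hh.eq_zero_of_nonpos x (by rw [uIcc_of_ge ha] at hx; exact hx.2)]
    simp
  tendsto_zero := by
    simpa using (hc.integral_hasStrictDerivAt 0 0).hasDerivAt.continuousAt.tendsto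

theorem exists_contDiff_one_majorant (hg : IsModulus g) :
    ∃ Θ : ℝ → ℝ, ContDiff ℝ 1 Θ ∧ Θ 0 = 0 ∧ deriv Θ 0 = 0 ∧ ∀ a, |a| * g |a| ≤ Θ a := by
  have hg₁ := (hg.comp_const_mul zero_le_two).const_mul zero_le_two
  set h := doublingMean fun r => 2 * g (2 * r)
  set P := fun a => ∫ x in (0 : ℝ)..a, h x
  have hP : IsModulus P := hg₁.doublingMean.primitive hg₁.continuous_doublingMean
  have hPC : ContDiff ℝ 1 P := by
    simpa using contDiff_primitive (n := 0) (contDiff_zero.2 hg₁.continuous_doublingMean)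
  refine ⟨fun a => P a + P (-a), hPC.add (hPC.comp contDiff_neg), by simp [P], ?_, fun a => ?_⟩
  · rw [deriv_add_comp_neg (hPC.differentiable one_ne_zero), neg_zero, sub_self]
  calc |a| * g |a| = |a| / 2 * (2 * g (2 * (|a| / 2))) := by ring_nf
    _ ≤ |a| / 2 * h (|a| / 2) := by gcongr; exact hg₁.le_doublingMean _
    _ ≤ P |a| := hg₁.doublingMean.mono.half_mul_le_integral (hg₁.doublingMean.nonneg 0)
      (abs_nonneg a)
    _ ≤ P a + P (-a) := le_add_comp_neg hP.nonneg a

theorem exists_contDiff_two_majorant (hg : IsModulus g) :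
    ∃ H : ℝ → ℝ, ContDiff ℝ 2 H ∧ H 0 = 0 ∧ deriv H 0 = 0 ∧ deriv (deriv H) 0 = 0 ∧
      ∀ z, z ^ 2 * g |z| ≤ H z := by
  have hg₂ := (hg.comp_const_mul (by norm_num : (0 : ℝ) ≤ 4)).const_mul
    (by norm_num : (0 : ℝ) ≤ 8)
  set h := doublingMean fun r => 8 * g (4 * r)
  set P := fun a => ∫ x in (0 : ℝ)..a, h x
  set Q := fun a => ∫ x in (0 : ℝ)..a, P x
  have hP : IsModulus P := hg₂.doublingMean.primitive hg₂.continuous_doublingMean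
  have hPC : ContDiff ℝ 1 P := by
    simpa using contDiff_primitive (n := 0) (contDiff_zero.2 hg₂.continuous_doublingMean)
  have hQ : IsModulus Q := hP.primitive hPC.continuous
  have hQC : ContDiff ℝ 2 Q := contDiff_primitive (n := 1) hPC
  have hQ' : deriv Q = P := funext (hPC.continuous.deriv_integral P 0)
  have hP' : deriv P = h := funext (hg₂.continuous_doublingMean.deriv_integral h 0)
  have hH' : deriv (fun z => Q z + Q (-z)) = fun z => P z - P (-z) := by
    funext z
    rw [deriv_add_comp_neg (hQC.differentiable two_ne_zero), hQ']
  refine ⟨fun z => Q z + Q (-z), hQC.add (hQC.comp contDiff_neg), by simp [Q], ?_, ?_,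
    fun z => ?_⟩
  · simp [hH', P]
  · have h0 : h 0 = 0 := hg₂.doublingMean.eq_zero_of_nonpos 0 le_rfl
    rw [hH', deriv_sub_comp_neg (hPC.differentiable one_ne_zero), hP', neg_zero, h0, add_zero]
  calc z ^ 2 * g |z| = |z| / 2 * (|z| / 4 * (8 * g (4 * (|z| / 4)))) := by
        rw [← sq_abs z]; ring_nf
    _ ≤ |z| / 2 * (|z| / 2 / 2 * h (|z| / 2 / 2)) := by
        rw [div_div]; norm_num; gcongr; exact hg₂.le_doublingMean _
    _ ≤ |z| / 2 * P (|z| / 2) := by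
        gcongr
        exact hg₂.doublingMean.mono.half_mul_le_integral (hg₂.doublingMean.nonneg 0)
          (by positivity)
    _ ≤ Q |z| := hP.mono.half_mul_le_integral (hP.nonneg 0) (abs_nonneg z)
    _ ≤ Q z + Q (-z) := le_add_comp_neg hQ.nonneg z

end IsModulus

lemma bddAbove_div_image {Z : Type*} {S : Set Z} {f ρ : Z → ℝ}
    (hsmall : ∃ δ > 0, ∀ z ∈ S, ρ z ≤ δ → f z ≤ ρ z)
    (hbdd : BddAbove (f '' {z ∈ S | ρ z ≤ r})) :
    BddAbove ((fun z => f z / ρ z) '' {z ∈ S | 0 < ρ z ∧ ρ z ≤ r}) := by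
  obtain ⟨δ, hδ, hfδ⟩ := hsmall
  obtain ⟨M, hM⟩ := hbdd
  refine ⟨max 1 (max M 0 / δ), ?_⟩
  rintro _ ⟨z, ⟨hzS, hzpos, hzr⟩, rfl⟩
  rcases le_or_gt (ρ z) δ with hz | hz
  · exact le_max_of_le_left (div_le_one_of_le₀ (hfδ z hzS hz) hzpos.le)
  · exact le_max_of_le_right (div_le_div₀ (le_max_right M 0)
      ((hM ⟨z, ⟨hzS, hzr⟩, rfl⟩).trans (le_max_left M 0)) hδ hz.le)

/-- The modulus is the monotone envelope `r ↦ sup {f z / ρ z | 0 < ρ z ≤ r}`; the summand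
`max r 0` added to it makes the bound strict. -/
theorem exists_isModulus_lt_mul {Z : Type*} (S : Set Z) (f ρ : Z → ℝ)
    (hsmall : ∀ ε > 0, ∃ δ > 0, ∀ z ∈ S, ρ z ≤ δ → f z ≤ ε * ρ z)
    (hbdd : ∀ r, BddAbove (f '' {z ∈ S | ρ z ≤ r})) :
    ∃ G, IsModulus G ∧ ∀ z ∈ S, 0 < ρ z → f z < ρ z * G (ρ z) := by
  set R : ℝ → Set ℝ := fun r => insert 0 ((fun z => f z / ρ z) '' {z ∈ S | 0 < ρ z ∧ ρ z ≤ r})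
  have hR : ∀ r, BddAbove (R r) := fun r =>
    (bddAbove_div_image (by simpa using hsmall 1 one_pos) (hbdd r)).insert 0
  have hR0 : ∀ r, 0 ≤ sSup (R r) := fun r => le_csSup (hR r) (mem_insert 0 _)
  refine ⟨fun r => sSup (R r) + max r 0, ⟨fun r r' hrr' => ?_, fun r hr => ?_, ?_⟩,
    fun z hzS hz => ?_⟩
  · refine add_le_add (csSup_le_csSup (hR r') (insert_nonempty _ _)
      (insert_subset_insert (image_mono ?_))) (max_le_max hrr' le_rfl)
    exact fun z ⟨hzS, hzpos, hzr⟩ => ⟨hzS, hzpos, hzr.trans hrr'⟩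
  · have hempty : {z ∈ S | 0 < ρ z ∧ ρ z ≤ r} = ∅ :=
      eq_empty_of_forall_notMem fun z ⟨_, hzpos, hzr⟩ => by linarith
    simp only [R, hempty, image_empty, insert_empty_eq, csSup_singleton, max_eq_right hr,
      add_zero]
  · refine tendsto_order.2 ⟨fun a ha => Eventually.of_forall fun r =>
      ha.trans_le (add_nonneg (hR0 r) (le_max_right r 0)), fun ε hε => ?_⟩
    obtain ⟨δ, hδ, hfδ⟩ := hsmall (ε / 2) (half_pos hε)
    filter_upwards [Iio_mem_nhds (lt_min hδ (half_pos hε))] with r hr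
    have hsup : sSup (R r) ≤ ε / 2 := by
      refine csSup_le (insert_nonempty _ _) ?_
      rintro _ (rfl | ⟨z, ⟨hzS, hzpos, hzr⟩, rfl⟩)
      · exact (half_pos hε).le
      · exact div_le_of_le_mul₀ hzpos.le (half_pos hε).le
          (hfδ z hzS (hzr.trans (hr.le.trans (min_le_left _ _))))
    have hmax : max r 0 < ε / 2 := max_lt (hr.trans_le (min_le_right _ _)) (half_pos hε)
    linarith
  · have hle : f z / ρ z ≤ sSup (R (ρ z)) :=
      le_csSup (hR _) (mem_insert_of_mem _ ⟨z, ⟨hzS, hz, le_rfl⟩, rfl⟩)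
    rw [div_le_iff₀ hz] at hle
    simp only [max_eq_left hz.le]
    nlinarith

lemma Monotone.apply_sum_le_sum_apply_card_mul {Γ : ℝ → ℝ} (hΓ : Monotone Γ) (hΓ0 : Γ 0 = 0)
    {ι : Type*} (s : Finset ι) {c : ι → ℝ} (hc : ∀ j ∈ s, 0 ≤ c j) :
    Γ (∑ j ∈ s, c j) ≤ ∑ j ∈ s, Γ (s.card * c j) := by
  rcases s.eq_empty_or_nonempty with rfl | hs
  · simp [hΓ0]
  obtain ⟨j, hj, hmax⟩ := s.exists_max_image c hs
  calc Γ (∑ j ∈ s, c j) ≤ Γ (s.card * c j) := by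
        simpa using hΓ (Finset.sum_le_card_nsmul s c (c j) hmax)
    _ ≤ ∑ k ∈ s, Γ (s.card * c k) := Finset.single_le_sum
        (fun k hk => hΓ0 ▸ hΓ (mul_nonneg (Nat.cast_nonneg _) (hc k hk))) hj

section InnerProductSpace

variable {F : Type*} [NormedAddCommGroup F] [InnerProductSpace ℝ F]

lemma hasFDerivAt_inner_sub_add_half_inner (q : F) {A : F →L[ℝ] F}
    (hA : (A : F →ₗ[ℝ] F).IsSymmetric) (x y : F) :
    HasFDerivAt (fun z => ⟪q, z - x⟫_ℝ + 1 / 2 * ⟪A (z - x), z - x⟫_ℝ)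
      (innerSL ℝ (q + A (y - x))) y := by
  have hsub : HasFDerivAt (fun z : F => z - x) (ContinuousLinearMap.id ℝ F) y :=
    (hasFDerivAt_id y).sub_const x
  refine (((innerSL ℝ q).hasFDerivAt.comp y hsub).add
    (((A.hasFDerivAt.comp y hsub).inner ℝ hsub).const_mul (1 / 2))).congr_fderiv ?_
  ext v
  have hsymm : ⟪A v, y - x⟫_ℝ = ⟪A (y - x), v⟫_ℝ := by
    rw [← real_inner_comm (A (y - x)) v]; exact hA v (y - x)
  simp only [_root_.add_apply, ContinuousLinearMap.comp_apply, FunLike.coe_smul,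
    Pi.smul_apply, smul_eq_mul, fderivInnerCLM_apply, ContinuousLinearMap.prod_apply,
    ContinuousLinearMap.id_apply, innerSL_apply_apply, Function.comp_apply, hsymm, inner_add_left]
  ring

variable [CompleteSpace F]

theorem abs_sub_sub_inner_sub_half_inner_le {f : F → ℝ} {f' : F → F} {f'' : F → F →L[ℝ] F}
    {A : F →L[ℝ] F} (hA : (A : F →ₗ[ℝ] F).IsSymmetric) {x y : F} {δ ε : ℝ}
    (hf : ∀ z ∈ Metric.ball x δ, HasGradientAt f (f' z) z)
    (hf' : ∀ z ∈ Metric.ball x δ, HasFDerivAt f' (f'' z) z)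
    (hf'' : ∀ z ∈ Metric.ball x δ, ‖f'' z - A‖ ≤ ε) (hy : y ∈ Metric.ball x δ) :
    |f y - f x - ⟪f' x, y - x⟫_ℝ - 1 / 2 * ⟪A (y - x), y - x⟫_ℝ| ≤ ε * ‖y - x‖ ^ 2 := by
  have hx : x ∈ Metric.ball x δ := Metric.mem_ball_self (Metric.pos_of_mem_ball hy)
  have hsub : ∀ z, HasFDerivAt (fun z : F => z - x) (ContinuousLinearMap.id ℝ F) z :=
    fun z => (hasFDerivAt_id z).sub_const x
  have hgrad : ∀ z ∈ Metric.ball x δ, ‖f' z - A (z - x) - f' x‖ ≤ ε * ‖z - x‖ := by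
    intro z hz
    simpa using (convex_ball x δ).norm_image_sub_le_of_norm_hasFDerivWithin_le
      (f := fun z => f' z - A (z - x))
      (fun w hw => ((hf' w hw).sub ((A.hasFDerivAt.comp w (hsub w)).congr_fderiv
        (A.comp_id))).hasFDerivWithinAt) hf'' hx hz
  have hderiv : ∀ z ∈ Metric.ball x δ, HasFDerivAt
      (fun z => f z - (⟪f' x, z - x⟫_ℝ + 1 / 2 * ⟪A (z - x), z - x⟫_ℝ))
      (innerSL ℝ (f' z - A (z - x) - f' x)) z := by
    intro z hz
    refine ((hf z hz).hasFDerivAt.sub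
      (hasFDerivAt_inner_sub_add_half_inner (f' x) hA x z)).congr_fderiv ?_
    ext v
    simp
    ring
  -- a convex set containing `x` and `y` on which `‖z - x‖ ≤ ‖y - x‖`
  have hy' : y ∈ Metric.closedBall x ‖y - x‖ ∩ Metric.ball x δ :=
    ⟨by simp [dist_eq_norm], hy⟩
  have hmv := ((convex_closedBall x ‖y - x‖).inter
    (convex_ball x δ)).norm_image_sub_le_of_norm_hasFDerivWithin_le
    (fun z hz => (hderiv z hz.2).hasFDerivWithinAt)
    (fun z hz => by
      rw [innerSL_apply_norm]
      exact (hgrad z hz.2).trans (mul_le_mul_of_nonneg_left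
        (by simpa [dist_eq_norm] using hz.1) ((norm_nonneg _).trans (hf'' x hx))))
    ⟨Metric.mem_closedBall_self (norm_nonneg _), hx⟩ hy'
  calc |f y - f x - ⟪f' x, y - x⟫_ℝ - 1 / 2 * ⟪A (y - x), y - x⟫_ℝ|
      = ‖(f y - (⟪f' x, y - x⟫_ℝ + 1 / 2 * ⟪A (y - x), y - x⟫_ℝ))
          - (f x - (⟪f' x, x - x⟫_ℝ + 1 / 2 * ⟪A (x - x), x - x⟫_ℝ))‖ := by
        simp only [sub_self, inner_zero_right, mul_zero, add_zero, sub_zero, Real.norm_eq_abs]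
        ring_nf
    _ ≤ ε * ‖y - x‖ * ‖y - x‖ := hmv
    _ = ε * ‖y - x‖ ^ 2 := by ring

end InnerProductSpace

lemma abs_sub_sub_mul_sub_le {g g' : ℝ → ℝ} {t s p ε : ℝ}
    (hg : ∀ r ∈ uIcc t s, HasDerivAt g (g' r) r) (hg' : ∀ r ∈ uIcc t s, |g' r - p| ≤ ε) :
    |g s - g t - p * (s - t)| ≤ ε * |s - t| := by
  have := (convex_uIcc t s).norm_image_sub_le_of_norm_hasDerivWithin_le
    (f := fun r => g r - p * r)
    (fun r hr => ((hg r hr).sub ((hasDerivAt_id r).const_mul p)).hasDerivWithinAt)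
    (fun r hr => by simpa using hg' r hr) left_mem_uIcc right_mem_uIcc
  rw [Real.norm_eq_abs, Real.norm_eq_abs] at this
  convert this using 2
  ring

section EuclideanSpace

variable {ι : Type*} [Fintype ι]

lemma EuclideanSpace.real_inner_sub_eq_sum_mul (q x y : EuclideanSpace ℝ ι) :
    ⟪q, y - x⟫_ℝ = ∑ i, q i * (y i - x i) := by
  simp [PiLp.inner_apply, mul_comm]

lemma matQuadForm_eq_inner {n : ℕ} (X : Matrix (Fin n) (Fin n) ℝ)
    (v : EuclideanSpace ℝ (Fin n)) :
    matQuadForm X v = ⟪Matrix.toEuclideanCLM (𝕜 := ℝ) X v, v⟫_ℝ := by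
  simp [matQuadForm, PiLp.inner_apply, Matrix.mulVec, dotProduct, mul_comm]

lemma hasFDerivAt_sum_comp_apply_sub {G : Type*} [NormedAddCommGroup G] [NormedSpace ℝ G]
    {f f' : ι → ℝ → G} (hf : ∀ i z, HasDerivAt (f i) (f' i z) z) (x y : EuclideanSpace ℝ ι) :
    HasFDerivAt (fun y : EuclideanSpace ℝ ι => ∑ i, f i (y i - x i))
      (∑ i, (EuclideanSpace.proj (𝕜 := ℝ) i).smulRight (f' i (y i - x i))) y := by
  refine HasFDerivAt.fun_sum fun i _ => ?_
  refine ((hf i _).hasFDerivAt.comp y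
    ((EuclideanSpace.proj i).hasFDerivAt.sub_const (x i))).congr_fderiv ?_
  ext
  simp

variable [DecidableEq ι]

lemma Matrix.IsSymm.isSymmetric_toEuclideanCLM {X : Matrix ι ι ℝ} (hX : X.IsSymm) :
    (Matrix.toEuclideanCLM (𝕜 := ℝ) X : EuclideanSpace ℝ ι →ₗ[ℝ] EuclideanSpace ℝ ι).IsSymmetric :=
  Matrix.isSymmetric_toEuclideanLin_iff.2 <| by
    rw [Matrix.IsHermitian, Matrix.conjTranspose_eq_transpose_of_trivial]; exact hX

lemma toDual_sum_smul_single (c : ι → ℝ) :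
    toDual ℝ (EuclideanSpace ℝ ι) (∑ i, c i • EuclideanSpace.single i 1) =
      ∑ i, (EuclideanSpace.proj (𝕜 := ℝ) i).smulRight (c i) := by
  ext v
  simp [EuclideanSpace.inner_single_left, mul_comm]

lemma hasGradientAt_inner_sub_add_half_inner_add_sum (q : EuclideanSpace ℝ ι)
    {A : EuclideanSpace ℝ ι →L[ℝ] EuclideanSpace ℝ ι}
    (hA : (A : EuclideanSpace ℝ ι →ₗ[ℝ] EuclideanSpace ℝ ι).IsSymmetric) {H : ℝ → ℝ}
    (hH : Differentiable ℝ H) (x y : EuclideanSpace ℝ ι) :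
    HasGradientAt (fun z => ⟪q, z - x⟫_ℝ + 1 / 2 * ⟪A (z - x), z - x⟫_ℝ + ∑ i, H (z i - x i))
      (q + A (y - x) + ∑ i, deriv H (y i - x i) • EuclideanSpace.single i 1) y := by
  rw [hasGradientAt_iff_hasFDerivAt, map_add, toDual_sum_smul_single]
  refine ((hasFDerivAt_inner_sub_add_half_inner q hA x y).add
    (hasFDerivAt_sum_comp_apply_sub (fun _ z => (hH z).hasDerivAt) x y)).congr_fderiv ?_
  ext v
  simp

lemma hasFDerivAt_add_sum_smul_single (q : EuclideanSpace ℝ ι)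
    (A : EuclideanSpace ℝ ι →L[ℝ] EuclideanSpace ℝ ι) {H' : ℝ → ℝ} (hH' : Differentiable ℝ H')
    (x y : EuclideanSpace ℝ ι) :
    HasFDerivAt (fun z => q + A (z - x) + ∑ i, H' (z i - x i) • EuclideanSpace.single i 1)
      (A + ∑ i, deriv H' (y i - x i) •
        (EuclideanSpace.proj (𝕜 := ℝ) i).smulRight (EuclideanSpace.single i 1)) y := by
  refine (((hasFDerivAt_const q y).add (A.hasFDerivAt.comp y ((hasFDerivAt_id y).sub_const x))).add
    (hasFDerivAt_sum_comp_apply_sub (fun i z => (hH' z).hasDerivAt.smul_const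
      (EuclideanSpace.single i (1 : ℝ))) x y)).congr_fderiv ?_
  ext v j
  simp [mul_left_comm]

end EuclideanSpace

section Majorant

variable {ι : Type*} [Fintype ι]

lemma IsModulus.mul_apply_le_add_sum {G Θ H : ℝ → ℝ} (hG : IsModulus G)
    (hΘ : ∀ a, |a| * ((Fintype.card ι + 1) * G ((Fintype.card ι + 1) * |a|)) ≤ Θ a)
    (hH : ∀ z, z ^ 2 * ((Fintype.card ι + 1) * G ((Fintype.card ι + 1) * max |z| 0 ^ 2)) ≤ H z)
    (a : ℝ) (z : ι → ℝ) :
    (|a| + ∑ i, z i ^ 2) * G (|a| + ∑ i, z i ^ 2) ≤ Θ a + ∑ i, H (z i) := by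
  -- `|a| + ∑ i, z i ^ 2` as a sum of `card ι + 1` terms indexed by `Option ι`
  set c : Option ι → ℝ := fun j => j.elim |a| fun i => z i ^ 2
  have hsplit := hG.monotone_mul_self.apply_sum_le_sum_apply_card_mul (zero_mul _)
    Finset.univ (c := c) fun j _ => by cases j <;> simp [c, sq_nonneg]
  simp only [Fintype.sum_option, Finset.card_univ, Fintype.card_option, Nat.cast_add,
    Nat.cast_one, c, Option.elim_none, Option.elim_some] at hsplit
  refine hsplit.trans (add_le_add ((le_of_eq (by ring)).trans (hΘ a))
    (Finset.sum_le_sum fun i _ => (le_of_eq ?_).trans (hH (z i))))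
  rw [max_eq_left (abs_nonneg _), sq_abs]
  ring

lemma abs_add_lt_of_abs_add_sq_le {a b δ : ℝ} (hb : 0 ≤ b) (hδ : 0 < δ)
    (h : |a| + b ^ 2 ≤ min (δ / 3) ((δ / 3) ^ 2)) : |a| + b < δ := by
  have ha : |a| ≤ δ / 3 := by
    nlinarith [min_le_left (δ / 3) ((δ / 3) ^ 2), sq_nonneg b]
  have hb' : b ≤ δ / 3 := by
    refine (pow_le_pow_iff_left₀ hb (by positivity) two_ne_zero).1 ?_
    nlinarith [min_le_right (δ / 3) ((δ / 3) ^ 2), abs_nonneg a]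
  linarith

lemma isCompact_sublevel_Icc_prod {F : Type*} [NormedAddCommGroup F] [ProperSpace F]
    (T t r : ℝ) (x : F) :
    IsCompact {z ∈ Icc 0 T ×ˢ (univ : Set F) | |z.1 - t| + ‖z.2 - x‖ ^ 2 ≤ r} := by
  refine (isCompact_Icc.prod (isCompact_closedBall x √r)).of_isClosed_subset
    ((isClosed_Icc.prod isClosed_univ).inter (isClosed_le
      (f := fun z : ℝ × F => |z.1 - t| + ‖z.2 - x‖ ^ 2) (by fun_prop) continuous_const))
    fun z ⟨hz, hzr⟩ => ⟨hz.1, ?_⟩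
  rw [Metric.mem_closedBall, dist_eq_norm]
  exact Real.le_sqrt_of_sq_le (by linarith [abs_nonneg (z.1 - t)])

theorem exists_flat_majorant {T t : ℝ} {x : EuclideanSpace ℝ ι}
    {w : ℝ → EuclideanSpace ℝ ι → ℝ}
    (hw : ContinuousOn (fun z : ℝ × EuclideanSpace ℝ ι => w z.1 z.2) (Icc 0 T ×ˢ univ))
    (hsmall : ∀ ε > 0, ∃ δ > 0, ∀ s ∈ Icc (0 : ℝ) T, ∀ y : EuclideanSpace ℝ ι,
      |s - t| + ‖y - x‖ < δ → w s y ≤ ε * (|s - t| + ‖y - x‖ ^ 2)) :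
    ∃ Θ H : ℝ → ℝ, ContDiff ℝ 1 Θ ∧ Θ 0 = 0 ∧ deriv Θ 0 = 0 ∧
      ContDiff ℝ 2 H ∧ H 0 = 0 ∧ deriv H 0 = 0 ∧ deriv (deriv H) 0 = 0 ∧
      ∀ s ∈ Icc (0 : ℝ) T, ∀ y : EuclideanSpace ℝ ι, (s, y) ≠ (t, x) →
        w s y < Θ (s - t) + ∑ i, H (y i - x i) := by
  set ρ : ℝ × EuclideanSpace ℝ ι → ℝ := fun z => |z.1 - t| + ‖z.2 - x‖ ^ 2
  have hρsmall : ∀ ε > 0, ∃ δ > 0, ∀ z ∈ Icc 0 T ×ˢ univ, ρ z ≤ δ → w z.1 z.2 ≤ ε * ρ z := by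
    intro ε hε
    obtain ⟨δ, hδ, hw⟩ := hsmall ε hε
    exact ⟨min (δ / 3) ((δ / 3) ^ 2), by positivity, fun z hz hρz =>
      hw z.1 hz.1 z.2 (abs_add_lt_of_abs_add_sq_le (norm_nonneg _) hδ hρz)⟩
  have hρbdd : ∀ r, BddAbove ((fun z => w z.1 z.2) '' {z ∈ Icc 0 T ×ˢ univ | ρ z ≤ r}) :=
    fun r => ((isCompact_sublevel_Icc_prod T t r x).image_of_continuousOn
      (hw.mono fun z hz => hz.1)).bddAbove
  obtain ⟨G, hG, hwG⟩ := exists_isModulus_lt_mul _ _ ρ hρsmall hρbdd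
  have hN : (0 : ℝ) ≤ Fintype.card ι + 1 := by positivity
  obtain ⟨Θ, hΘ, hΘ0, hΘ'0, hΘw⟩ :=
    ((hG.comp_const_mul hN).const_mul hN).exists_contDiff_one_majorant
  obtain ⟨H, hH, hH0, hH'0, hH''0, hHw⟩ :=
    ((hG.comp_const_mul_posPart_sq hN).const_mul hN).exists_contDiff_two_majorant
  refine ⟨Θ, H, hΘ, hΘ0, hΘ'0, hH, hH0, hH'0, hH''0, fun s hs y hne => ?_⟩
  have hρ : 0 < ρ (s, y) := by
    rcases eq_or_ne s t with rfl | hst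
    · have hyx : y - x ≠ 0 := sub_ne_zero.2 fun h => hne (h ▸ rfl)
      exact add_pos_of_nonneg_of_pos (abs_nonneg _) (pow_pos (norm_pos_iff.2 hyx) 2)
    · exact add_pos_of_pos_of_nonneg (abs_pos.2 (sub_ne_zero.2 hst)) (by positivity)
  calc w s y < ρ (s, y) * G (ρ (s, y)) := hwG (s, y) ⟨hs, trivial⟩ hρ
    _ ≤ Θ (s - t) + ∑ i, H (y i - x i) := by
      simp only [ρ, EuclideanSpace.real_norm_sq_eq, PiLp.sub_apply]
      exact hG.mul_apply_le_add_sum hΘw hHw _ _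

end Majorant

section Superjet

variable {n : ℕ} {T t : ℝ} {x : EuclideanSpace ℝ (Fin n)}

lemma InParabolicSuperjet.of_sub_le {u φ : ℝ → EuclideanSpace ℝ (Fin n) → ℝ} {p : ℝ}
    {q : EuclideanSpace ℝ (Fin n)} {X : Matrix (Fin n) (Fin n) ℝ}
    (hle : ∀ s ∈ Icc (0 : ℝ) T, ∀ y, u s y - u t x ≤ φ s y - φ t x)
    (hφ : InParabolicSuperjet T φ t x p q X) : InParabolicSuperjet T u t x p q X :=
  ⟨hφ.1, fun ε hε => (hφ.2 ε hε).imp fun _ ⟨hδ, hφδ⟩ =>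
    ⟨hδ, fun s hs y hsy => by linarith [hle s hs y, hφδ s hs y hsy]⟩⟩

theorem inParabolicSuperjet_of_hasDerivAt {φ φt : ℝ → EuclideanSpace ℝ (Fin n) → ℝ}
    {φx : ℝ → EuclideanSpace ℝ (Fin n) → EuclideanSpace ℝ (Fin n)}
    {φxx : ℝ → EuclideanSpace ℝ (Fin n) →
      (EuclideanSpace ℝ (Fin n) →L[ℝ] EuclideanSpace ℝ (Fin n))}
    {X : Matrix (Fin n) (Fin n) ℝ} (hX : X.IsSymm)
    (hφt_cont : ContinuousAt (fun z : ℝ × EuclideanSpace ℝ (Fin n) => φt z.1 z.2) (t, x))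
    (hφt : ∀ s y, HasDerivAt (fun r => φ r y) (φt s y) s)
    (hφx : ∀ y, HasGradientAt (φ t) (φx t y) y)
    (hφxx_cont : ContinuousAt (φxx t) x) (hφxx : ∀ y, HasFDerivAt (φx t) (φxx t y) y)
    (hXφ : φxx t x = Matrix.toEuclideanCLM (𝕜 := ℝ) X) :
    InParabolicSuperjet T φ t x (φt t x) (φx t x) X := by
  refine ⟨hX, fun ε hε => ?_⟩
  obtain ⟨δ₁, hδ₁, htime⟩ := Metric.continuousAt_iff.1 hφt_cont ε hε
  obtain ⟨δ₂, hδ₂, hspace⟩ := Metric.continuousAt_iff.1 hφxx_cont ε hε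
  refine ⟨min δ₁ δ₂, lt_min hδ₁ hδ₂, fun s _ y hsy => ?_⟩
  have hst : |s - t| < δ₁ := by
    linarith [min_le_left δ₁ δ₂, norm_nonneg (y - x)]
  have hyx : ‖y - x‖ < min δ₁ δ₂ := by linarith [abs_nonneg (s - t)]
  have htime_incr : |φ s y - φ t y - φt t x * (s - t)| ≤ ε * |s - t| := by
    refine abs_sub_sub_mul_sub_le (fun r _ => hφt r y) fun r hr => ?_
    have hdist : dist (r, y) (t, x) < δ₁ := by
      rw [Prod.dist_eq, Real.dist_eq, dist_eq_norm]
      exact max_lt ((abs_sub_left_of_mem_uIcc hr).trans_lt hst) (hyx.trans_le (min_le_left _ _))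
    have := htime hdist
    rw [Real.dist_eq] at this
    exact this.le
  have hspace_incr := abs_sub_sub_inner_sub_half_inner_le hX.isSymmetric_toEuclideanCLM
    (fun z _ => hφx z) (fun z _ => hφxx z)
    (fun z hz => by rw [← hXφ, ← dist_eq_norm]; exact (hspace hz).le) (y := y) (by
      rw [Metric.mem_ball, dist_eq_norm]; exact hyx.trans_le (min_le_right _ _))
  rw [← EuclideanSpace.real_inner_sub_eq_sum_mul, matQuadForm_eq_inner]
  rw [abs_le] at htime_incr hspace_incr
  linarith

theorem exists_testFunction_of_inParabolicSuperjet {u : ℝ → EuclideanSpace ℝ (Fin n) → ℝ}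
    (hu : ContinuousOn (fun z : ℝ × EuclideanSpace ℝ (Fin n) => u z.1 z.2) (Icc 0 T ×ˢ univ))
    {p : ℝ} {q : EuclideanSpace ℝ (Fin n)} {X : Matrix (Fin n) (Fin n) ℝ}
    (hsj : InParabolicSuperjet T u t x p q X) :
    ∃ (φ φt : ℝ → EuclideanSpace ℝ (Fin n) → ℝ)
      (φx : ℝ → EuclideanSpace ℝ (Fin n) → EuclideanSpace ℝ (Fin n))
      (φxx : ℝ → EuclideanSpace ℝ (Fin n) →
        (EuclideanSpace ℝ (Fin n) →L[ℝ] EuclideanSpace ℝ (Fin n))),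
      Continuous (fun z : ℝ × EuclideanSpace ℝ (Fin n) => φt z.1 z.2) ∧
      (∀ s y, HasDerivAt (fun r => φ r y) (φt s y) s) ∧
      Continuous (fun z : ℝ × EuclideanSpace ℝ (Fin n) => φx z.1 z.2) ∧
      (∀ s y, HasGradientAt (φ s) (φx s y) y) ∧
      Continuous (fun z : ℝ × EuclideanSpace ℝ (Fin n) => φxx z.1 z.2) ∧
      (∀ s y, HasFDerivAt (φx s) (φxx s y) y) ∧
      (∀ s ∈ Icc (0 : ℝ) T, ∀ y, (s, y) ≠ (t, x) → u s y - φ s y < u t x - φ t x) ∧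
      φ t x = u t x ∧ φt t x = p ∧ φx t x = q ∧
      (∀ v i, φxx t x v i = ∑ j, X i j * v j) := by
  have hw : ContinuousOn (fun z : ℝ × EuclideanSpace ℝ (Fin n) => u z.1 z.2 - u t x
      - p * (z.1 - t) - ∑ i, q i * (z.2 i - x i) - 1 / 2 * matQuadForm X (z.2 - x))
      (Icc 0 T ×ˢ univ) := by
    simp only [matQuadForm]
    fun_prop
  obtain ⟨Θ, H, hΘ, hΘ0, hΘ'0, hH, hH0, hH'0, hH''0, hdom⟩ := exists_flat_majorant hw hsj.2
  have hH'C : ContDiff ℝ 1 (deriv H) := hH.deriv'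
  have hH'_cont : Continuous (deriv H) := hH'C.continuous
  have hH''_cont : Continuous (deriv (deriv H)) := hH'C.continuous_deriv_one
  -- abstracting the operator lets `fun_prop` see it as a continuous linear map
  obtain ⟨A, hAX⟩ : ∃ A, Matrix.toEuclideanCLM (𝕜 := ℝ) X = A := ⟨_, rfl⟩
  refine ⟨fun s y => u t x + p * (s - t) + Θ (s - t) +
      (⟪q, y - x⟫_ℝ + 1 / 2 * ⟪A (y - x), y - x⟫_ℝ + ∑ i, H (y i - x i)),
    fun s _ => p + deriv Θ (s - t),
    fun _ y => q + A (y - x) + ∑ i, deriv H (y i - x i) • EuclideanSpace.single i 1,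
    fun _ y => A + ∑ i, deriv (deriv H) (y i - x i) •
      (EuclideanSpace.proj (𝕜 := ℝ) i).smulRight (EuclideanSpace.single i 1),
    by fun_prop, fun s y => ?_, by fun_prop, fun s y => ?_, by fun_prop, fun s y => ?_,
    fun s hs y hne => ?_, by simp [hΘ0, hH0], by simp [hΘ'0], by simp [hH'0],
    fun v i => by simp [hH''0, ← hAX, Matrix.mulVec, dotProduct]⟩
  · have hsub := (hasDerivAt_id s).sub_const t
    exact ((((hsub.const_mul p).const_add (u t x)).add
      ((hΘ.differentiable one_ne_zero (s - t)).hasDerivAt.comp s hsub)).add_const _).congr_deriv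
      (by simp)
  · have := hasGradientAt_inner_sub_add_half_inner_add_sum q
      (hAX ▸ hsj.1.isSymmetric_toEuclideanCLM) (hH.differentiable two_ne_zero) x y
    rw [hasGradientAt_iff_hasFDerivAt] at this ⊢
    exact this.const_add _
  · exact hasFDerivAt_add_sum_smul_single q A (hH'C.differentiable one_ne_zero) x y
  · have h := hdom s hs y hne
    rw [← EuclideanSpace.real_inner_sub_eq_sum_mul, matQuadForm_eq_inner, hAX] at h
    simp only [sub_self, hΘ0, hH0, inner_zero_right, mul_zero, add_zero, Finset.sum_const_zero]
    linarith

end Superjet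

theorem superjet_iff_testFunction_general {n : ℕ} {T : ℝ}
    (u : ℝ → EuclideanSpace ℝ (Fin n) → ℝ)
    (hu : ContinuousOn (fun pr : ℝ × EuclideanSpace ℝ (Fin n) => u pr.1 pr.2)
      (Set.Icc 0 T ×ˢ Set.univ))
    {t : ℝ} {x : EuclideanSpace ℝ (Fin n)}
    (p : ℝ) (q : EuclideanSpace ℝ (Fin n)) (X : Matrix (Fin n) (Fin n) ℝ) :
    InParabolicSuperjet T u t x p q X ↔
      (X.IsSymm ∧
        ∃ (φ : ℝ → EuclideanSpace ℝ (Fin n) → ℝ)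
          (φt : ℝ → EuclideanSpace ℝ (Fin n) → ℝ)
          (φx : ℝ → EuclideanSpace ℝ (Fin n) → EuclideanSpace ℝ (Fin n))
          (φxx : ℝ → EuclideanSpace ℝ (Fin n) →
            (EuclideanSpace ℝ (Fin n) →L[ℝ] EuclideanSpace ℝ (Fin n))),
          -- φ is C¹ in time with continuous time derivative φt
          Continuous (fun pr : ℝ × EuclideanSpace ℝ (Fin n) => φt pr.1 pr.2) ∧
          (∀ (s : ℝ) (y : EuclideanSpace ℝ (Fin n)),
            HasDerivAt (fun r => φ r y) (φt s y) s) ∧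
          -- φ is C² in space with continuous gradient φx and continuous Hessian φxx
          Continuous (fun pr : ℝ × EuclideanSpace ℝ (Fin n) => φx pr.1 pr.2) ∧
          (∀ (s : ℝ) (y : EuclideanSpace ℝ (Fin n)), HasGradientAt (φ s) (φx s y) y) ∧
          Continuous (fun pr : ℝ × EuclideanSpace ℝ (Fin n) => φxx pr.1 pr.2) ∧
          (∀ (s : ℝ) (y : EuclideanSpace ℝ (Fin n)), HasFDerivAt (φx s) (φxx s y) y) ∧
          -- u − φ attains a strict global maximum over [0,T] × ℝⁿ at (t,x)
          (∀ s ∈ Set.Icc (0 : ℝ) T, ∀ y : EuclideanSpace ℝ (Fin n),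
            (s, y) ≠ (t, x) → u s y - φ s y < u t x - φ t x) ∧
          -- (φ, ∂_t φ, ∇_x φ, ∇²_x φ)(t,x) = (u(t,x), p, q, X)
          φ t x = u t x ∧ φt t x = p ∧ φx t x = q ∧
          (∀ (v : EuclideanSpace ℝ (Fin n)) (i : Fin n),
            φxx t x v i = ∑ j, X i j * v j)) := by
  refine ⟨fun hsj => ⟨hsj.1, exists_testFunction_of_inParabolicSuperjet hu hsj⟩, ?_⟩
  rintro ⟨hX, φ, φt, φx, φxx, hφt_cont, hφt, -, hφx, hφxx_cont, hφxx, hmax, -, rfl, rfl, hXφ⟩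
  have hsub_le : ∀ s ∈ Set.Icc (0 : ℝ) T, ∀ y, u s y - u t x ≤ φ s y - φ t x := by
    intro s hs y
    rcases eq_or_ne (s, y) (t, x) with h | h
    · obtain ⟨rfl, rfl⟩ := Prod.mk.inj h
      simp
    · linarith [hmax s hs y h]
  refine (inParabolicSuperjet_of_hasDerivAt hX hφt_cont.continuousAt hφt (hφx t)
    (hφxx_cont.comp (continuous_const.prodMk continuous_id)).continuousAt (hφxx t) ?_).of_sub_le
    hsub_le
  ext v i
  simp [hXφ, Matrix.mulVec, dotProduct]

/-- For continuous `u` on `[0,T] × ℝⁿ` and `(t,x) ∈ (0,T) × ℝⁿ`,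
`(p,q,X) ∈ 𝒫^{2,+}u(t,x)` iff there is a test function `φ`, continuously
differentiable in time and twice continuously differentiable in space, such that
`u − φ` attains a strict global maximum over `[0,T] × ℝⁿ` at `(t,x)` and
`(φ, ∂_t φ, ∇_x φ, ∇²_x φ)(t,x) = (u(t,x), p, q, X)`. -/
theorem superjet_iff_testFunction {n : ℕ} (hn : 1 ≤ n) {T : ℝ} (hT : 0 < T)
    (u : ℝ → EuclideanSpace ℝ (Fin n) → ℝ)
    (hu : ContinuousOn (fun pr : ℝ × EuclideanSpace ℝ (Fin n) => u pr.1 pr.2)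
      (Set.Icc 0 T ×ˢ Set.univ))
    {t : ℝ} {x : EuclideanSpace ℝ (Fin n)} (ht : t ∈ Set.Ioo 0 T)
    (p : ℝ) (q : EuclideanSpace ℝ (Fin n)) (X : Matrix (Fin n) (Fin n) ℝ) :
    InParabolicSuperjet T u t x p q X ↔
      (X.IsSymm ∧
        ∃ (φ : ℝ → EuclideanSpace ℝ (Fin n) → ℝ)
          (φt : ℝ → EuclideanSpace ℝ (Fin n) → ℝ)
          (φx : ℝ → EuclideanSpace ℝ (Fin n) → EuclideanSpace ℝ (Fin n))
          (φxx : ℝ → EuclideanSpace ℝ (Fin n) →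
            (EuclideanSpace ℝ (Fin n) →L[ℝ] EuclideanSpace ℝ (Fin n))),
          -- φ is C¹ in time with continuous time derivative φt
          Continuous (fun pr : ℝ × EuclideanSpace ℝ (Fin n) => φt pr.1 pr.2) ∧
          (∀ (s : ℝ) (y : EuclideanSpace ℝ (Fin n)),
            HasDerivAt (fun r => φ r y) (φt s y) s) ∧
          -- φ is C² in space with continuous gradient φx and continuous Hessian φxx
          Continuous (fun pr : ℝ × EuclideanSpace ℝ (Fin n) => φx pr.1 pr.2) ∧
          (∀ (s : ℝ) (y : EuclideanSpace ℝ (Fin n)), HasGradientAt (φ s) (φx s y) y) ∧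
          Continuous (fun pr : ℝ × EuclideanSpace ℝ (Fin n) => φxx pr.1 pr.2) ∧
          (∀ (s : ℝ) (y : EuclideanSpace ℝ (Fin n)), HasFDerivAt (φx s) (φxx s y) y) ∧
          -- u − φ attains a strict global maximum over [0,T] × ℝⁿ at (t,x)
          (∀ s ∈ Set.Icc (0 : ℝ) T, ∀ y : EuclideanSpace ℝ (Fin n),
            (s, y) ≠ (t, x) → u s y - φ s y < u t x - φ t x) ∧
          -- (φ, ∂_t φ, ∇_x φ, ∇²_x φ)(t,x) = (u(t,x), p, q, X)
          φ t x = u t x ∧ φt t x = p ∧ φx t x = q ∧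
          (∀ (v : EuclideanSpace ℝ (Fin n)) (i : Fin n),
            φxx t x v i = ∑ j, X i j * v j)) :=
  superjet_iff_testFunction_general u hu p q X
end
end

section
/- Let v : [0,T] × ℝⁿ → ℝ be continuous and suppose: (i) there exist constants C ≥ 0 and m ≥ 0 such that v(t+h, z) − v(t, z) ≤ C(1 + ‖z‖^m) h for all z ∈ ℝⁿ and all 0 < t < t+h < T; (ii) there exists C₀ ≥ 0 such that for every t ∈ [0,T] the function y ↦ v(t,y) − C₀‖y‖² is concave on ℝⁿ. Then for any (t,x) ∈ (0,T) × ℝⁿ, any (p,q,X) ∈ 𝒫^{2,+}v(t,x), any y ∈ ℝⁿ and any h > 0 with t + h < T, one has v(t+h, y) − v(t, x) ≤ C(1 + ‖y‖^m) h + ⟨q, y−x⟩ + C₀‖y−x‖². (This is the pointwise inequality underlying the first display in the proof of the paper's Lemma 4.4.) -/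
/-!
Split `v(t+h,y) − v(t,x)` into the time increment `v(t+h,y) − v(t,y)`, bounded by the growth
condition, and the space increment `v(t,y) − v(t,x)`. Along the segment `z = x + s(y−x)` the
superjet gives `v(t,z) − v(t,x) ≤ s⟨q,y−x⟩ + O(s²)`, while concavity of `w = v(t,·) − C₀‖·‖²`
makes `s ↦ (w(x + s(y−x)) − w(x))/s` nonincreasing; comparing `s = 1` with `s → 0⁺` yields
`v(t,y) − v(t,x) ≤ ⟨q,y−x⟩ + C₀‖y−x‖²`.
-/

noncomputable section

open scoped BigOperators

open Filter Topology Set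

lemma ConcaveOn.mul_sub_le_sub_add_smul {E : Type*} [AddCommGroup E] [Module ℝ E]
    {f : E → ℝ} (hf : ConcaveOn ℝ univ f) (x u : E) {s : ℝ} (hs₀ : 0 ≤ s) (hs₁ : s ≤ 1) :
    s * (f (x + u) - f x) ≤ f (x + s • u) - f x := by
  have hmix := hf.2 (mem_univ x) (mem_univ (x + u)) (sub_nonneg.2 hs₁) hs₀ (by ring)
  have hpoint : (1 - s) • x + s • (x + u) = x + s • u := by module
  rw [hpoint, smul_eq_mul, smul_eq_mul] at hmix
  linarith

lemma ConcaveOn.sub_le_of_eventually_sub_le {E : Type*} [AddCommGroup E] [Module ℝ E]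
    {f : E → ℝ} (hf : ConcaveOn ℝ univ f) {x u : E} {a K : ℝ}
    (h : ∀ᶠ s in 𝓝[>] (0 : ℝ), f (x + s • u) - f x ≤ s * a + s ^ 2 * K) :
    f (x + u) - f x ≤ a := by
  have hlim : Tendsto (fun s : ℝ => a + s * K) (𝓝[>] 0) (𝓝 a) := by
    have : Tendsto (fun s : ℝ => a + s * K) (𝓝 0) (𝓝 (a + 0 * K)) :=
      (continuous_const.add (continuous_id.mul continuous_const)).tendsto 0
    simpa using this.mono_left nhdsWithin_le_nhds
  refine ge_of_tendsto hlim ?_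
  filter_upwards [h, Ioo_mem_nhdsGT one_pos] with s hs hs_mem
  have hconc := hf.mul_sub_le_sub_add_smul x u hs_mem.1.le hs_mem.2.le
  have hdiv : s * (f (x + u) - f x) ≤ s * (a + s * K) := by linarith
  exact le_of_mul_le_mul_left hdiv hs_mem.1

lemma sub_le_add_mul_norm_sq_of_concaveOn_sub_mul_norm_sq {E : Type*}
    [NormedAddCommGroup E] [InnerProductSpace ℝ E] {g : E → ℝ} {C₀ : ℝ}
    (hg : ConcaveOn ℝ univ (fun y => g y - C₀ * ‖y‖ ^ 2)) {x u : E} {a K : ℝ}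
    (h : ∀ᶠ s in 𝓝[>] (0 : ℝ), g (x + s • u) - g x ≤ s * a + s ^ 2 * K) :
    g (x + u) - g x ≤ a + C₀ * ‖u‖ ^ 2 := by
  have hw := hg.sub_le_of_eventually_sub_le (x := x) (u := u)
    (a := a - 2 * C₀ * inner ℝ x u) (K := K - C₀ * ‖u‖ ^ 2) <| by
    filter_upwards [h] with s hs
    simp only [norm_add_sq_real x (s • u), real_inner_smul_right, norm_smul, mul_pow,
      Real.norm_eq_abs, sq_abs]
    linarith
  simp only [norm_add_sq_real x u] at hw
  linarith

lemma matQuadForm_smul {n : ℕ} (X : Matrix (Fin n) (Fin n) ℝ) (s : ℝ)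
    (u : EuclideanSpace ℝ (Fin n)) : matQuadForm X (s • u) = s ^ 2 * matQuadForm X u := by
  have hrow : ∀ i, ∑ j, X i j * (s • u) j = s * ∑ j, X i j * u j := fun i => by
    simp only [PiLp.smul_apply, smul_eq_mul, Finset.mul_sum]
    exact Finset.sum_congr rfl fun j _ => by ring
  simp only [matQuadForm, hrow]
  rw [Finset.mul_sum]
  exact Finset.sum_congr rfl fun i _ => by simp only [PiLp.smul_apply, smul_eq_mul]; ring

lemma InParabolicSuperjet.eventually_sub_le {n : ℕ} {T : ℝ}
    {v : ℝ → EuclideanSpace ℝ (Fin n) → ℝ} {t p : ℝ} {x q : EuclideanSpace ℝ (Fin n)}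
    {X : Matrix (Fin n) (Fin n) ℝ} (hpqX : InParabolicSuperjet T v t x p q X)
    (ht : t ∈ Icc 0 T) (u : EuclideanSpace ℝ (Fin n)) :
    ∀ᶠ s in 𝓝[>] (0 : ℝ), v t (x + s • u) - v t x
      ≤ s * ∑ i, q i * u i + s ^ 2 * ((1 / 2) * matQuadForm X u + ‖u‖ ^ 2) := by
  obtain ⟨δ, hδ, hjet⟩ := hpqX.2 1 one_pos
  have hlim : Tendsto (fun s : ℝ => ‖s • u‖) (𝓝 0) (𝓝 0) := by
    simpa using ((continuous_id.smul continuous_const).norm.tendsto (0 : ℝ) :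
      Tendsto (fun s : ℝ => ‖s • u‖) (𝓝 0) (𝓝 ‖(0 : ℝ) • u‖))
  filter_upwards [nhdsWithin_le_nhds (hlim.eventually (gt_mem_nhds hδ))] with s hs
  have hbound := hjet t ht (x + s • u) (by simpa using hs)
  have hsum : ∑ i, q i * ((x + s • u) i - x i) = s * ∑ i, q i * u i := by
    simp only [PiLp.add_apply, PiLp.smul_apply, smul_eq_mul, add_sub_cancel_left,
      Finset.mul_sum]
    exact Finset.sum_congr rfl fun i _ => by ring
  simp only [add_sub_cancel_left, sub_self, abs_zero, mul_zero, sub_zero, zero_add, one_mul,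
    hsum, matQuadForm_smul, norm_smul, mul_pow, Real.norm_eq_abs, sq_abs] at hbound
  linarith

theorem growth_semiconcave_superjet_estimate_general {n : ℕ} {T : ℝ}
    (v : ℝ → EuclideanSpace ℝ (Fin n) → ℝ)
    {C : ℝ} (m : ℕ)
    (hgrow : ∀ z : EuclideanSpace ℝ (Fin n), ∀ t h : ℝ,
      0 < t → 0 < h → t + h < T →
      v (t + h) z - v t z ≤ C * (1 + ‖z‖ ^ m) * h)
    {C₀ : ℝ}
    (hconc : ∀ t ∈ Set.Icc (0 : ℝ) T,
      ConcaveOn ℝ Set.univ (fun y : EuclideanSpace ℝ (Fin n) => v t y - C₀ * ‖y‖ ^ 2))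
    {t : ℝ} {x : EuclideanSpace ℝ (Fin n)} (ht : t ∈ Set.Ioo 0 T)
    (p : ℝ) (q : EuclideanSpace ℝ (Fin n)) (X : Matrix (Fin n) (Fin n) ℝ)
    (hpqX : InParabolicSuperjet T v t x p q X)
    (y : EuclideanSpace ℝ (Fin n)) {h : ℝ} (hh : 0 < h) (hth : t + h < T) :
    v (t + h) y - v t x
      ≤ C * (1 + ‖y‖ ^ m) * h + (∑ i, q i * (y i - x i)) + C₀ * ‖y - x‖ ^ 2 := by
  have ht' : t ∈ Icc 0 T := Ioo_subset_Icc_self ht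
  have hspace : v t y - v t x ≤ (∑ i, q i * (y i - x i)) + C₀ * ‖y - x‖ ^ 2 := by
    have := sub_le_add_mul_norm_sq_of_concaveOn_sub_mul_norm_sq (hconc t ht')
      (hpqX.eventually_sub_le ht' (y - x))
    simpa only [add_sub_cancel, PiLp.sub_apply] using this
  have htime := hgrow y t h ht.1 hh hth
  linarith

/-- Let `v : [0,T] × ℝⁿ → ℝ` be continuous and suppose
(i) `v(t+h,z) − v(t,z) ≤ C (1 + ‖z‖^m) h` for all `z` and `0 < t < t+h < T`;
(ii) `y ↦ v(t,y) − C₀‖y‖²` is concave for every `t ∈ [0,T]`.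
Then for `(t,x) ∈ (0,T) × ℝⁿ`, `(p,q,X) ∈ 𝒫^{2,+}v(t,x)`, any `y` and any
`h > 0` with `t + h < T`:
`v(t+h,y) − v(t,x) ≤ C (1 + ‖y‖^m) h + ⟨q, y−x⟩ + C₀‖y−x‖²`. -/
theorem growth_semiconcave_superjet_estimate {n : ℕ} {T : ℝ}
    (v : ℝ → EuclideanSpace ℝ (Fin n) → ℝ)
    (hv : ContinuousOn (fun pr : ℝ × EuclideanSpace ℝ (Fin n) => v pr.1 pr.2)
      (Set.Icc 0 T ×ˢ Set.univ))
    {C : ℝ} (hC : 0 ≤ C) (m : ℕ)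
    (hgrow : ∀ z : EuclideanSpace ℝ (Fin n), ∀ t h : ℝ,
      0 < t → 0 < h → t + h < T →
      v (t + h) z - v t z ≤ C * (1 + ‖z‖ ^ m) * h)
    {C₀ : ℝ} (hC₀ : 0 ≤ C₀)
    (hconc : ∀ t ∈ Set.Icc (0 : ℝ) T,
      ConcaveOn ℝ Set.univ (fun y : EuclideanSpace ℝ (Fin n) => v t y - C₀ * ‖y‖ ^ 2))
    {t : ℝ} {x : EuclideanSpace ℝ (Fin n)} (ht : t ∈ Set.Ioo 0 T)
    (p : ℝ) (q : EuclideanSpace ℝ (Fin n)) (X : Matrix (Fin n) (Fin n) ℝ)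
    (hpqX : InParabolicSuperjet T v t x p q X)
    (y : EuclideanSpace ℝ (Fin n)) {h : ℝ} (hh : 0 < h) (hth : t + h < T) :
    v (t + h) y - v t x
      ≤ C * (1 + ‖y‖ ^ m) * h + (∑ i, q i * (y i - x i)) + C₀ * ‖y - x‖ ^ 2 :=
  growth_semiconcave_superjet_estimate_general v m hgrow hconc ht p q X hpqX y hh hth
end
end
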